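/- Fix E₁, E₂ ∈ ℝ^{2×2}_{sym} with E₂ ≠ 0 and constants μ, γ > 0. Consider E₀(f) = ∫_{−1/2}^{1/2} ( μ|t E₁ + f(t) E₂|² + γ f′(t)² ) dt over odd functions f ∈ H¹(−1/2, 1/2). Then the infimum equals E₀* = (μ/12)( |E₁|² − g(α) (E₁:E₂)²/|E₂|² ), where α = (μ/γ)^{1/2}|E₂| and g(α) = 1 − 12α^{−2} + 24α^{−3} tanh(α/2). -/

import Mathlib

noncomputable def fsAux (K β C2 : ℝ) (t : ℝ) : ℝ := K * (Real.sinh (β*t)/(β*C2) - t)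
noncomputable def dsAux (K β C2 : ℝ) (t : ℝ) : ℝ := K * (Real.cosh (β*t)/C2 - 1)

lemma fsAux_contDiff (K β C2 : ℝ) : ContDiff ℝ 1 (fsAux K β C2) := by
  unfold fsAux
  exact contDiff_const.mul (((Real.contDiff_sinh.comp (contDiff_const.mul contDiff_id)).div_const _).sub contDiff_id)

lemma fsAux_hasDerivAt (K β C2 : ℝ) (hβ : β ≠ 0) (t : ℝ) :
    HasDerivAt (fsAux K β C2) (dsAux K β C2 t) t := by
  have h1 : HasDerivAt (fun t : ℝ => β * t) β t := by
    simpa using (hasDerivAt_id t).const_mul β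
  have h3 := (((h1.sinh).div_const (β*C2)).sub (hasDerivAt_id t)).const_mul K
  refine h3.congr_deriv ?_
  unfold dsAux
  rw [mul_comm (Real.cosh (β*t)) β, mul_div_mul_left _ _ hβ]

lemma dsAux_hasDerivAt (K β C2 : ℝ) (t : ℝ) :
    HasDerivAt (dsAux K β C2) (K*β*Real.sinh (β*t)/C2) t := by
  have h1 : HasDerivAt (fun t : ℝ => β * t) β t := by
    simpa using (hasDerivAt_id t).const_mul β
  have h3 := (((h1.cosh).div_const C2).sub (hasDerivAt_const t 1)).const_mul K
  refine h3.congr_deriv ?_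
  ring

lemma fsAux_odd (K β C2 : ℝ) (t : ℝ) : fsAux K β C2 (-t) = - fsAux K β C2 t := by
  unfold fsAux; rw [mul_neg, Real.sinh_neg]; ring

lemma fsAux_cont (K β C2 : ℝ) : Continuous (fsAux K β C2) := (fsAux_contDiff K β C2).continuous
lemma dsAux_cont (K β C2 : ℝ) : Continuous (dsAux K β C2) := by unfold dsAux; fun_prop

theorem aux1D (a b c μ γ β : ℝ) (hμ : 0 < μ) (hγ : 0 < γ) (hc : 0 < c)
    (hβ : 0 < β) (hβ2 : γ * β^2 = μ * c) :
    sInf {x : ℝ | ∃ f : ℝ → ℝ, ContDiff ℝ 1 f ∧ (∀ t, f (-t) = -f t) ∧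
        x = ∫ t in (-(1/2):ℝ)..(1/2), (μ * (t^2*a + 2*t*(f t)*b + (f t)^2*c) + γ * (deriv f t)^2)}
      = μ/12 * (a - (1 - 12/β^2 + 24/β^3 * Real.tanh (β/2)) * b^2 / c) := by
  have hβne : β ≠ 0 := hβ.ne'
  set K := b / c with hK
  set C2 := Real.cosh (β/2) with hC2
  have hC2pos : 0 < C2 := by rw [hC2]; exact Real.cosh_pos _
  have hcK : c * K = b := by rw [hK]; field_simp
  -- Euler–Lagrange identity
  have hEL : ∀ t : ℝ, γ * (K*β*Real.sinh (β*t)/C2) = μ*b*t + μ*c*(fsAux K β C2 t) := by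
    intro t
    unfold fsAux
    rw [hK]
    field_simp
    linear_combination (b*Real.sinh (β*t)) * hβ2
  -- ds vanishes at endpoints
  have hds_half : dsAux K β C2 (1/2) = 0 := by
    unfold dsAux
    rw [show β * (1/2) = β/2 by ring, ← hC2, div_self hC2pos.ne']
    ring
  have hds_nhalf : dsAux K β C2 (-(1/2)) = 0 := by
    unfold dsAux
    rw [show β * (-(1/2)) = -(β/2) by ring, Real.cosh_neg, ← hC2, div_self hC2pos.ne']
    ring
  set Fs : ℝ → ℝ := fun t =>
    μ * (t^2*a + 2*t*(fsAux K β C2 t)*b + (fsAux K β C2 t)^2*c) + γ * (dsAux K β C2 t)^2 with hFs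
  have hFscont : Continuous Fs := by
    have h1 := fsAux_cont K β C2
    have h2 := dsAux_cont K β C2
    rw [hFs]; fun_prop
  -- value of the energy at the minimizer
  have hFsval : (∫ t in (-(1/2):ℝ)..(1/2), Fs t)
      = μ/12 * (a - (1 - 12/β^2 + 24/β^3 * Real.tanh (β/2)) * b^2 / c) := by
    have hH : ∀ t ∈ Set.uIcc (-(1/2):ℝ) (1/2),
        HasDerivAt (fun t : ℝ => μ*a*t^3/3 + μ*c*K^2*( -(t^3/3)
            + Real.sinh (β*t)*Real.cosh (β*t)/(β^3*C2^2)
            - 2*Real.sinh (β*t)/(β^3*C2) + t/β^2 )) (Fs t) t := by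
      intro t _
      have h1 : HasDerivAt (fun t : ℝ => β * t) β t := by
        simpa using (hasDerivAt_id t).const_mul β
      have hid : HasDerivAt (fun x : ℝ => x / β^2) (1/β^2) t := by
        simpa using (hasDerivAt_id t).div_const (β^2)
      have hD := (((hasDerivAt_pow 3 t).const_mul (μ*a)).div_const 3).add
        (((((((hasDerivAt_pow 3 t).div_const 3).neg).add
            (((h1.sinh).mul (h1.cosh)).div_const (β^3*C2^2))).sub
            (((h1.sinh).const_mul 2).div_const (β^3*C2))).add
            hid).const_mul (μ*c*K^2))
      refine hD.congr_deriv ?_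
      symm
      simp only [hFs]
      unfold fsAux dsAux
      push_cast
      rw [hK]
      field_simp
      linear_combination (b^2*(Real.cosh (t*β) - C2)^2) * hβ2
    rw [intervalIntegral.integral_eq_sub_of_hasDerivAt hH (hFscont.intervalIntegrable _ _)]
    rw [Real.tanh_eq_sinh_div_cosh]
    rw [show β * (1/2 : ℝ) = β/2 by ring, show β * (-(1/2) : ℝ) = -(β/2) by ring,
      Real.sinh_neg, Real.cosh_neg, ← hC2]
    have hb : b = c * K := hcK.symm
    rw [hb]
    field_simp
    ring
  -- lower bound
  have hlow : ∀ f : ℝ → ℝ, ContDiff ℝ 1 f →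
      (∫ t in (-(1/2):ℝ)..(1/2), Fs t) ≤
      ∫ t in (-(1/2):ℝ)..(1/2), (μ * (t^2*a + 2*t*(f t)*b + (f t)^2*c) + γ * (deriv f t)^2) := by
    intro f hf
    have hfd : ∀ t, HasDerivAt f (deriv f t) t := fun t => (hf.differentiable one_ne_zero t).hasDerivAt
    have hfdc : Continuous (deriv f) := hf.continuous_deriv le_rfl
    have hfc : Continuous f := hf.continuous
    set Q : ℝ → ℝ := fun t => μ*c*(f t - fsAux K β C2 t)^2 + γ*(deriv f t - dsAux K β C2 t)^2 with hQ
    set Dp : ℝ → ℝ := fun t => 2*γ*(K*β*Real.sinh (β*t)/C2)*(f t - fsAux K β C2 t)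
        + 2*γ*(dsAux K β C2 t)*(deriv f t - dsAux K β C2 t) with hDp
    have h1 := fsAux_cont K β C2
    have h2 := dsAux_cont K β C2
    have hQcont : Continuous Q := by rw [hQ]; fun_prop
    have hDpcont : Continuous Dp := by rw [hDp]; fun_prop
    have hptw : ∀ t : ℝ, μ * (t^2*a + 2*t*(f t)*b + (f t)^2*c) + γ * (deriv f t)^2
        = Fs t + Q t + Dp t := by
      intro t
      simp only [hFs, hQ, hDp]
      linear_combination (-2*(f t - fsAux K β C2 t)) * hEL t
    have hsplit : (∫ t in (-(1/2):ℝ)..(1/2), (μ * (t^2*a + 2*t*(f t)*b + (f t)^2*c) + γ * (deriv f t)^2))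
        = (∫ t in (-(1/2):ℝ)..(1/2), Fs t) + (∫ t in (-(1/2):ℝ)..(1/2), Q t)
          + (∫ t in (-(1/2):ℝ)..(1/2), Dp t) := by
      rw [intervalIntegral.integral_congr (g := fun t => Fs t + Q t + Dp t) (fun t _ => hptw t)]
      rw [intervalIntegral.integral_add (f := fun t => Fs t + Q t) ((hFscont.add hQcont).intervalIntegrable _ _)
          (hDpcont.intervalIntegrable _ _),
        intervalIntegral.integral_add (hFscont.intervalIntegrable _ _) (hQcont.intervalIntegrable _ _)]
    have hDpzero : (∫ t in (-(1/2):ℝ)..(1/2), Dp t) = 0 := by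
      have hDer : ∀ t ∈ Set.uIcc (-(1/2):ℝ) (1/2),
          HasDerivAt (fun t => 2*γ*(dsAux K β C2 t)*(f t - fsAux K β C2 t)) (Dp t) t := by
        intro t _
        have hh := ((dsAux_hasDerivAt K β C2 t).const_mul (2*γ)).mul
          ((hfd t).sub (fsAux_hasDerivAt K β C2 hβne t))
        exact hh.congr_deriv rfl
      rw [intervalIntegral.integral_eq_sub_of_hasDerivAt hDer (hDpcont.intervalIntegrable _ _)]
      rw [hds_half, hds_nhalf]; ring
    have hQnn : 0 ≤ ∫ t in (-(1/2):ℝ)..(1/2), Q t := by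
      apply intervalIntegral.integral_nonneg (by norm_num)
      intro t _
      simp only [hQ]
      exact add_nonneg (mul_nonneg (mul_nonneg hμ.le hc.le) (sq_nonneg _))
        (mul_nonneg hγ.le (sq_nonneg _))
    rw [hsplit, hDpzero]
    linarith
  -- the minimizer is admissible and attains the value
  have hmem : (μ/12 * (a - (1 - 12/β^2 + 24/β^3 * Real.tanh (β/2)) * b^2 / c)) ∈
      {x : ℝ | ∃ f : ℝ → ℝ, ContDiff ℝ 1 f ∧ (∀ t, f (-t) = -f t) ∧
        x = ∫ t in (-(1/2):ℝ)..(1/2), (μ * (t^2*a + 2*t*(f t)*b + (f t)^2*c) + γ * (deriv f t)^2)} := by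
    refine ⟨fsAux K β C2, fsAux_contDiff K β C2, fsAux_odd K β C2, ?_⟩
    rw [← hFsval]
    apply intervalIntegral.integral_congr
    intro t _
    have hd : deriv (fsAux K β C2) t = dsAux K β C2 t := (fsAux_hasDerivAt K β C2 hβne t).deriv
    simp only [hFs, hd]
  have hbdd : ∀ x ∈ {x : ℝ | ∃ f : ℝ → ℝ, ContDiff ℝ 1 f ∧ (∀ t, f (-t) = -f t) ∧
        x = ∫ t in (-(1/2):ℝ)..(1/2), (μ * (t^2*a + 2*t*(f t)*b + (f t)^2*c) + γ * (deriv f t)^2)},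
      μ/12 * (a - (1 - 12/β^2 + 24/β^3 * Real.tanh (β/2)) * b^2 / c) ≤ x := by
    rintro x ⟨f, hf, -, rfl⟩
    rw [← hFsval]
    exact hlow f hf
  exact le_antisymm (csInf_le ⟨_, hbdd⟩ hmem) (le_csInf ⟨_, hmem⟩ hbdd)



open Matrix

/-- Squared Frobenius norm of a 2×2 real matrix. -/
noncomputable def frobSq2 (A : Matrix (Fin 2) (Fin 2) ℝ) : ℝ := ∑ i, ∑ j, (A i j) ^ 2

/-- Frobenius inner product of 2×2 real matrices. -/
noncomputable def dot2 (A B : Matrix (Fin 2) (Fin 2) ℝ) : ℝ := ∑ i, ∑ j, A i j * B i j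

/-- The 1D energy `E₀(f) = ∫_{-1/2}^{1/2} ( μ|t E₁ + f(t) E₂|² + γ f'(t)² ) dt`. -/
noncomputable def E0 (μ γ : ℝ) (E₁ E₂ : Matrix (Fin 2) (Fin 2) ℝ) (f : ℝ → ℝ) : ℝ :=
  ∫ t in (-(1 / 2) : ℝ)..(1 / 2),
    (μ * frobSq2 (t • E₁ + f t • E₂) + γ * (deriv f t) ^ 2)

lemma frob_expand (E₁ E₂ : Matrix (Fin 2) (Fin 2) ℝ) (x y : ℝ) :
    frobSq2 (x • E₁ + y • E₂)
      = x^2 * frobSq2 E₁ + 2*x*y*(dot2 E₁ E₂) + y^2 * frobSq2 E₂ := by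
  simp only [frobSq2, dot2, Fin.sum_univ_two, Matrix.add_apply, Matrix.smul_apply, smul_eq_mul]
  ring

/-- The infimum of `E₀` over odd functions equals
`(μ/12)(|E₁|² − g(α)(E₁:E₂)²/|E₂|²)` with `α = (μ/γ)^{1/2}|E₂|` and
`g(α) = 1 − 12α⁻² + 24α⁻³ tanh(α/2)`. -/
theorem inf_E0_over_odd_functions (μ γ : ℝ) (hμ : 0 < μ) (hγ : 0 < γ)
    (E₁ E₂ : Matrix (Fin 2) (Fin 2) ℝ) (h₁ : E₁.IsSymm) (h₂ : E₂.IsSymm) (hne : E₂ ≠ 0) :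
    sInf {x : ℝ | ∃ f : ℝ → ℝ, ContDiff ℝ 1 f ∧ (∀ t, f (-t) = -f t) ∧ x = E0 μ γ E₁ E₂ f}
      = μ / 12 *
        (frobSq2 E₁ -
          (1 - 12 / (Real.sqrt (μ / γ) * Real.sqrt (frobSq2 E₂)) ^ 2 +
              24 / (Real.sqrt (μ / γ) * Real.sqrt (frobSq2 E₂)) ^ 3 *
                Real.tanh (Real.sqrt (μ / γ) * Real.sqrt (frobSq2 E₂) / 2)) *
            (dot2 E₁ E₂) ^ 2 / frobSq2 E₂) := by
  have hc : 0 < frobSq2 E₂ := by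
    rcases (Finset.sum_nonneg fun i _ => Finset.sum_nonneg fun j _ => sq_nonneg (E₂ i j)).lt_or_eq
      with h | h
    · exact h
    · exfalso
      apply hne
      have h' : E₂ 0 0 ^ 2 + E₂ 0 1 ^ 2 + (E₂ 1 0 ^ 2 + E₂ 1 1 ^ 2) = 0 := by
        simpa [frobSq2, Fin.sum_univ_two] using h.symm
      ext i j
      fin_cases i <;> fin_cases j <;> simp <;>
        nlinarith [sq_nonneg (E₂ 0 0), sq_nonneg (E₂ 0 1), sq_nonneg (E₂ 1 0), sq_nonneg (E₂ 1 1)]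
  set a := frobSq2 E₁ with ha
  set b := dot2 E₁ E₂ with hb
  set c := frobSq2 E₂ with hcdef
  set β := Real.sqrt (μ/γ) * Real.sqrt c with hβdef
  have hβ : 0 < β := mul_pos (Real.sqrt_pos.2 (div_pos hμ hγ)) (Real.sqrt_pos.2 hc)
  have hβ2 : γ * β^2 = μ * c := by
    rw [hβdef, mul_pow, Real.sq_sqrt (div_pos hμ hγ).le, Real.sq_sqrt hc.le]
    field_simp
  have hE : ∀ f : ℝ → ℝ, E0 μ γ E₁ E₂ f
      = ∫ t in (-(1/2):ℝ)..(1/2),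
          (μ * (t^2*a + 2*t*(f t)*b + (f t)^2*c) + γ * (deriv f t)^2) := by
    intro f
    unfold E0
    apply intervalIntegral.integral_congr
    intro t _
    simp only []
    rw [frob_expand, ha, hb, hcdef]
  simp only [hE]
  exact aux1D a b c μ γ β hμ hγ hc hβ hβ2
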